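/- Let A ∈ ℝ^{n×n}, B ∈ ℝⁿ, Q symmetric positive definite, μ > 0, N ≥ 1 and ε > 0. Suppose P is a symmetric positive definite n×n matrix satisfying the Riccati equation P = AᵀPA − AᵀPB(BᵀPB + r)⁻¹BᵀPA + Q with r = Nμ²/(4ε). Define J(U,x) = x_NᵀPx_N + Σ_{i=0}^{N−1} x_iᵀQx_i + μΣ_{i=0}^{N−1}|u_i| (with x₀ = x, x_{i+1} = Ax_i + Bu_i), V(x) = inf_{U∈ℝ^N} J(U,x), and fix a map U*: ℝⁿ → ℝ^N such that for every x, J(U*(x), x) ≤ J(U, x) for all U ∈ ℝ^N. Writing U*(x) = (u₀(x),…,u_{N−1}(x)), define f^i(x) = A^i x + Σ_{l=0}^{i−1} A^{i−1−l}B u_l(x) for i = 1,…,N. Then for every x ∈ ℝⁿ and every i ∈ {1,…,N}: V(f^i(x)) − V(x) ≤ −λ_min(Q)‖x‖₂² + ε. -/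

import Mathlib

open Matrix

/-- Predicted state sequence of the plant `x(i+1) = A x(i) + u(i) • B` started at `x`. -/
noncomputable def stateSeq {n : ℕ} (A : Matrix (Fin n) (Fin n) ℝ) (B : Fin n → ℝ)
    (x : Fin n → ℝ) (u : ℕ → ℝ) : ℕ → Fin n → ℝ
  | 0 => x
  | i + 1 => A.mulVec (stateSeq A B x u i) + u i • B

/-- The finite-horizon `ℓ¹/ℓ²` cost
`J(U,x) = x_NᵀPx_N + Σ_{i<N} x_iᵀQx_i + μ Σ_{i<N} |u_i|`,
where `x_0 = x` and `x_{i+1} = A x_i + B u_i`. -/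
noncomputable def costJ {n N : ℕ} (A : Matrix (Fin n) (Fin n) ℝ) (B : Fin n → ℝ)
    (P Q : Matrix (Fin n) (Fin n) ℝ) (μ : ℝ) (U : Fin N → ℝ) (x : Fin n → ℝ) : ℝ :=
  let u : ℕ → ℝ := fun i => if h : i < N then U ⟨i, h⟩ else 0
  stateSeq A B x u N ⬝ᵥ P.mulVec (stateSeq A B x u N)
    + ∑ i : Fin N, stateSeq A B x u i ⬝ᵥ Q.mulVec (stateSeq A B x u i)
    + μ * ∑ i : Fin N, |U i|

/-- The state reached after `i` steps of open-loop application of the packet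
`Ustar x` to the plant: `f^i(x) = A^i x + Σ_{l<i} A^{i−1−l} B u_l(x)`. -/
noncomputable def fIter {n N : ℕ} (A : Matrix (Fin n) (Fin n) ℝ) (B : Fin n → ℝ)
    (Ustar : (Fin n → ℝ) → Fin N → ℝ) (i : ℕ) (x : Fin n → ℝ) : Fin n → ℝ :=
  (A ^ i).mulVec x +
    ∑ l ∈ Finset.range i,
      (if h : l < N then Ustar x ⟨l, h⟩ else 0) • (A ^ (i - 1 - l)).mulVec B

/-!
Extend the part of the optimal packet `U*(x)` that is still unused at `f^i(x)` by `i` steps of the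
Riccati feedback `u = Kz`. By the Riccati equation each feedback step lowers `zᵀPz` by the stage
cost `zᵀQz + μ|Kz|` up to the slack `μ|Kz| − r(Kz)² ≤ μ²/(4r) = ε/N`. Hence the shifted packet
costs at most `V(x)` minus the first `i` stage costs plus `iε/N ≤ ε` at `f^i(x)`, and the first
stage cost is at least `xᵀQx ≥ λ_min(Q)‖x‖²`.
-/

open Finset

section Dynamics

variable {n : ℕ} (A : Matrix (Fin n) (Fin n) ℝ) (B : Fin n → ℝ)

theorem stateSeq_congr (x : Fin n → ℝ) {u u' : ℕ → ℝ} {j : ℕ} (h : ∀ l < j, u l = u' l) :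
    stateSeq A B x u j = stateSeq A B x u' j := by
  induction j with
  | zero => rfl
  | succ j ih => rw [stateSeq, stateSeq, ih fun l hl => h l (by omega), h j (by omega)]

theorem stateSeq_add (x : Fin n → ℝ) (u : ℕ → ℝ) (i j : ℕ) :
    stateSeq A B x u (i + j) = stateSeq A B (stateSeq A B x u i) (fun l => u (i + l)) j := by
  induction j with
  | zero => rfl
  | succ j ih => rw [← add_assoc, stateSeq, ih, stateSeq]

theorem stateSeq_eq_sum (x : Fin n → ℝ) (u : ℕ → ℝ) (i : ℕ) :
    stateSeq A B x u i
      = (A ^ i) *ᵥ x + ∑ l ∈ range i, u l • (A ^ (i - 1 - l)) *ᵥ B := by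
  induction i with
  | zero => simp [stateSeq]
  | succ i ih =>
    have hpow : ∀ l ∈ range i, A *ᵥ (u l • (A ^ (i - 1 - l)) *ᵥ B)
        = u l • (A ^ (i + 1 - 1 - l)) *ᵥ B := by
      intro l hl
      rw [mulVec_smul, mulVec_mulVec, ← pow_succ',
        show i - 1 - l + 1 = i + 1 - 1 - l by grind]
    rw [stateSeq, ih, sum_range_succ, mulVec_add, mulVec_mulVec, ← pow_succ', mulVec_sum,
      sum_congr rfl hpow, show i + 1 - 1 - i = 0 by omega, pow_zero, one_mulVec, add_assoc]

theorem exists_closedLoop_input (x : Fin n → ℝ) (π : ℕ → (Fin n → ℝ) → ℝ) :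
    ∃ w : ℕ → ℝ, ∀ m, w m = π m (stateSeq A B x w m) := by
  let s : ℕ → Fin n → ℝ := fun m => Nat.rec x (fun m z => A *ᵥ z + π m z • B) m
  refine ⟨fun m => π m (s m), fun m => ?_⟩
  suffices h : ∀ m, stateSeq A B x (fun m => π m (s m)) m = s m by rw [h]
  intro m
  induction m with
  | zero => rfl
  | succ m ih => rw [stateSeq, ih]

end Dynamics

theorem fIter_eq_stateSeq {n N : ℕ} (A : Matrix (Fin n) (Fin n) ℝ) (B : Fin n → ℝ)
    (Ustar : (Fin n → ℝ) → Fin N → ℝ) (i : ℕ) (x : Fin n → ℝ) :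
    fIter A B Ustar i x
      = stateSeq A B x (fun l => if h : l < N then Ustar x ⟨l, h⟩ else 0) i :=
  (stateSeq_eq_sum A B x _ i).symm

section Cost

variable {n : ℕ} (A : Matrix (Fin n) (Fin n) ℝ) (B : Fin n → ℝ) (P Q : Matrix (Fin n) (Fin n) ℝ)
  (μ : ℝ)

noncomputable def stageCost (z : Fin n → ℝ) (a : ℝ) : ℝ :=
  z ⬝ᵥ Q *ᵥ z + μ * |a|

noncomputable def runningCost (x : Fin n → ℝ) (u : ℕ → ℝ) (k : ℕ) : ℝ :=
  ∑ m ∈ range k, stageCost Q μ (stateSeq A B x u m) (u m)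

variable {Q μ}

theorem stageCost_nonneg (hQ : Q.PosSemidef) (hμ : 0 ≤ μ) (z : Fin n → ℝ) (a : ℝ) :
    0 ≤ stageCost Q μ z a := by
  have hz : 0 ≤ z ⬝ᵥ Q *ᵥ z := by simpa using hQ.dotProduct_mulVec_nonneg z
  unfold stageCost
  positivity

theorem runningCost_add (x : Fin n → ℝ) (u : ℕ → ℝ) (a b : ℕ) :
    runningCost A B Q μ x u (a + b)
      = runningCost A B Q μ x u a
        + runningCost A B Q μ (stateSeq A B x u a) (fun l => u (a + l)) b := by
  simp only [runningCost, sum_range_add, stateSeq_add]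

theorem stageCost_le_runningCost (hQ : Q.PosSemidef) (hμ : 0 ≤ μ) (x : Fin n → ℝ)
    (u : ℕ → ℝ) {k : ℕ} (hk : 1 ≤ k) :
    stageCost Q μ x (u 0) ≤ runningCost A B Q μ x u k :=
  single_le_sum (f := fun m => stageCost Q μ (stateSeq A B x u m) (u m))
    (fun _ _ => stageCost_nonneg hQ hμ _ _) (mem_range.2 hk)

theorem costJ_eq {N : ℕ} (U : Fin N → ℝ) (x : Fin n → ℝ) (u : ℕ → ℝ)
    (hu : ∀ j : Fin N, u j = U j) :
    costJ A B P Q μ U x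
      = stateSeq A B x u N ⬝ᵥ P *ᵥ stateSeq A B x u N + runningCost A B Q μ x u N := by
  have hstate : ∀ m ≤ N,
      stateSeq A B x (fun i => if h : i < N then U ⟨i, h⟩ else 0) m = stateSeq A B x u m :=
    fun m hm => stateSeq_congr A B x fun l hl => by simp [← hu ⟨l, by omega⟩, show l < N by omega]
  simp only [costJ, runningCost, stageCost, sum_add_distrib, ← mul_sum, hstate N le_rfl,
    ← Fin.sum_univ_eq_sum_range (fun m => stateSeq A B x u m ⬝ᵥ Q *ᵥ stateSeq A B x u m),
    ← Fin.sum_univ_eq_sum_range (fun m => |u m|), hu, fun j : Fin N => hstate j j.isLt.le]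
  ring

theorem closedLoop_cost_le (κ : (Fin n → ℝ) → ℝ) (δ : ℝ)
    (hstep : ∀ z, (A *ᵥ z + κ z • B) ⬝ᵥ P *ᵥ (A *ᵥ z + κ z • B) + stageCost Q μ z (κ z)
      ≤ z ⬝ᵥ P *ᵥ z + δ)
    (y : Fin n → ℝ) (w : ℕ → ℝ) (hw : ∀ m, w m = κ (stateSeq A B y w m)) (k : ℕ) :
    stateSeq A B y w k ⬝ᵥ P *ᵥ stateSeq A B y w k + runningCost A B Q μ y w k
      ≤ y ⬝ᵥ P *ᵥ y + k * δ := by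
  induction k with
  | zero => simp [stateSeq, runningCost]
  | succ k ih =>
    have h := hstep (stateSeq A B y w k)
    rw [← hw] at h
    rw [runningCost, sum_range_succ, stateSeq, ← runningCost]
    push_cast
    linarith

theorem iInf_costJ_fIter_le {N : ℕ} (hQ : Q.PosSemidef) (hμ : 0 ≤ μ) (κ : (Fin n → ℝ) → ℝ)
    (δ : ℝ)
    (hstep : ∀ z, (A *ᵥ z + κ z • B) ⬝ᵥ P *ᵥ (A *ᵥ z + κ z • B) + stageCost Q μ z (κ z)
      ≤ z ⬝ᵥ P *ᵥ z + δ)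
    (Ustar : (Fin n → ℝ) → Fin N → ℝ)
    (hUstar : ∀ x (U : Fin N → ℝ), costJ A B P Q μ (Ustar x) x ≤ costJ A B P Q μ U x)
    (x : Fin n → ℝ) {i : ℕ} (hi : 1 ≤ i) (hiN : i ≤ N) :
    (⨅ U : Fin N → ℝ, costJ A B P Q μ U (fIter A B Ustar i x))
      ≤ (⨅ U : Fin N → ℝ, costJ A B P Q μ U x) - x ⬝ᵥ Q *ᵥ x + i * δ := by
  -- `v (i + ·)` is the candidate packet at `f^i(x)`
  obtain ⟨v, hv⟩ := exists_closedLoop_input A B x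
    fun m z => if h : m < N then Ustar x ⟨m, h⟩ else κ z
  have hvU (j : Fin N) : v j = Ustar x j := by rw [hv]; simp
  have hvtail (m : ℕ) :
      v (N + m) = κ (stateSeq A B (stateSeq A B x v N) (fun l => v (N + l)) m) := by
    rw [hv, ← stateSeq_add]; simp
  have hfIter : fIter A B Ustar i x = stateSeq A B x v i :=
    (fIter_eq_stateSeq A B Ustar i x).trans <|
      stateSeq_congr A B x fun l hl => by rw [dif_pos (by omega)]; exact (hvU ⟨l, by omega⟩).symm
  have hbdd y : BddBelow (Set.range fun U => costJ A B P Q μ U y) :=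
    ⟨_, Set.forall_mem_range.2 (hUstar y)⟩
  have hVx : (⨅ U : Fin N → ℝ, costJ A B P Q μ U x)
      = stateSeq A B x v N ⬝ᵥ P *ᵥ stateSeq A B x v N + runningCost A B Q μ x v N :=
    (le_antisymm (ciInf_le (hbdd x) _) (le_ciInf (hUstar x))).trans (costJ_eq A B P _ x v hvU)
  have hVy : (⨅ U : Fin N → ℝ, costJ A B P Q μ U (fIter A B Ustar i x))
      ≤ stateSeq A B x v (i + N) ⬝ᵥ P *ᵥ stateSeq A B x v (i + N)
        + runningCost A B Q μ (stateSeq A B x v i) (fun l => v (i + l)) N := by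
    refine (ciInf_le (hbdd _) fun j => v (i + j)).trans_eq ?_
    rw [costJ_eq A B P _ _ (fun l => v (i + l)) fun _ => rfl, hfIter, stateSeq_add]
  have htail := closedLoop_cost_le A B P κ δ hstep _ _ hvtail i
  have hsplit₁ := runningCost_add A B (Q := Q) (μ := μ) x v i N
  have hsplit₂ := runningCost_add A B (Q := Q) (μ := μ) x v N i
  rw [← stateSeq_add, add_comm N i] at htail
  rw [add_comm N i] at hsplit₂
  have hfirst := stageCost_le_runningCost A B hQ hμ x v hi
  unfold stageCost at hfirst
  linarith [mul_nonneg hμ (abs_nonneg (v 0))]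

end Cost

theorem mul_abs_sub_mul_sq_le {μ r : ℝ} (hr : 0 < r) (a : ℝ) :
    μ * |a| - r * a ^ 2 ≤ μ ^ 2 / (4 * r) := by
  rw [le_div_iff₀ (by positivity), ← sq_abs a]
  nlinarith [sq_nonneg (2 * r * |a| - μ)]

theorem Matrix.IsHermitian.iInf_eigenvalues_mul_dotProduct_le {ι : Type*} [Fintype ι]
    [DecidableEq ι] {M : Matrix ι ι ℝ} (hM : M.IsHermitian) (x : ι → ℝ) :
    (⨅ j, hM.eigenvalues j) * (x ⬝ᵥ x) ≤ x ⬝ᵥ M *ᵥ x := by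
  set U : Matrix ι ι ℝ := (hM.eigenvectorUnitary : Matrix ι ι ℝ)
  have hUU : U * star U = 1 := mem_unitaryGroup_iff.mp hM.eigenvectorUnitary.2
  set c : ι → ℝ := star U *ᵥ x with hc
  have hcv : c = x ᵥ* U := by
    rw [hc, star_eq_conjTranspose, conjTranspose_eq_transpose_of_trivial, mulVec_transpose]
  have hMx : x ⬝ᵥ M *ᵥ x = ∑ j, hM.eigenvalues j * (c j * c j) := by
    conv_lhs => rw [hM.spectral_theorem, Unitary.conjStarAlgAut_apply]
    rw [← mulVec_mulVec, ← mulVec_mulVec, dotProduct_mulVec, ← hcv, ← hc]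
    simp only [mulVec_diagonal, dotProduct]
    exact sum_congr rfl fun j _ => by simp [RCLike.ofReal_real_eq_id]; ring
  have hxx : x ⬝ᵥ x = ∑ j, c j * c j := by
    have h : c ⬝ᵥ c = x ⬝ᵥ x := by
      nth_rewrite 2 [hc]
      rw [dotProduct_mulVec, hcv, vecMul_vecMul, hUU, vecMul_one]
    rw [← h, dotProduct]
  rw [hMx, hxx, mul_sum]
  refine sum_le_sum fun j _ => mul_le_mul_of_nonneg_right ?_ (mul_self_nonneg _)
  exact ciInf_le (Set.finite_range _).bddBelow j

section Riccati

variable {n : ℕ} (A P : Matrix (Fin n) (Fin n) ℝ) (B : Fin n → ℝ) (r : ℝ)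

noncomputable def riccatiInput (z : Fin n → ℝ) : ℝ :=
  -((B ⬝ᵥ P *ᵥ B + r)⁻¹ * ((B ᵥ* (P * A)) ⬝ᵥ z))

variable {A P B r}

theorem riccatiInput_step_eq {Q : Matrix (Fin n) (Fin n) ℝ} (hPsymm : Pᵀ = P)
    (hs : B ⬝ᵥ P *ᵥ B + r ≠ 0)
    (hric : P = Aᵀ * P * A
      - (B ⬝ᵥ P *ᵥ B + r)⁻¹ • vecMulVec ((Aᵀ * P) *ᵥ B) (B ᵥ* (P * A)) + Q)
    (z : Fin n → ℝ) :
    let a := riccatiInput A P B r z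
    (A *ᵥ z + a • B) ⬝ᵥ P *ᵥ (A *ᵥ z + a • B) + z ⬝ᵥ Q *ᵥ z + r * a ^ 2 = z ⬝ᵥ P *ᵥ z := by
  intro a
  set w := (B ᵥ* (P * A)) ⬝ᵥ z
  have hsymm : ∀ v v', v ⬝ᵥ P *ᵥ v' = v' ⬝ᵥ P *ᵥ v := fun v v' => by
    rw [dotProduct_mulVec, ← vecMul_transpose, hPsymm, dotProduct_comm]
  have hAB : A *ᵥ z ⬝ᵥ P *ᵥ B = w := by
    rw [hsymm, dotProduct_mulVec, dotProduct_mulVec, vecMul_vecMul]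
  have hPz : z ⬝ᵥ P *ᵥ z
      = A *ᵥ z ⬝ᵥ P *ᵥ (A *ᵥ z) - (B ⬝ᵥ P *ᵥ B + r)⁻¹ * (w * w) + z ⬝ᵥ Q *ᵥ z := by
    conv_lhs => rw [hric]
    rw [add_mulVec, sub_mulVec, smul_mulVec, dotProduct_add, dotProduct_sub, dotProduct_smul,
      ← mulVec_mulVec, ← mulVec_mulVec, dotProduct_mulVec z Aᵀ, vecMul_transpose,
      vecMulVec_mulVec, op_smul_eq_smul, dotProduct_smul, ← mulVec_mulVec, dotProduct_mulVec z Aᵀ,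
      vecMul_transpose, hAB, smul_eq_mul, smul_eq_mul, mul_comm w]
  rw [hPz, mulVec_add, mulVec_smul, dotProduct_add, add_dotProduct, add_dotProduct,
    dotProduct_smul, smul_dotProduct, smul_dotProduct, dotProduct_smul, hsymm B, hAB]
  simp only [a, riccatiInput, smul_eq_mul]
  field_simp
  ring

theorem riccatiInput_step_le {Q : Matrix (Fin n) (Fin n) ℝ} (μ : ℝ) (hPsymm : Pᵀ = P)
    (hr : 0 < r) (hs : B ⬝ᵥ P *ᵥ B + r ≠ 0)
    (hric : P = Aᵀ * P * A
      - (B ⬝ᵥ P *ᵥ B + r)⁻¹ • vecMulVec ((Aᵀ * P) *ᵥ B) (B ᵥ* (P * A)) + Q)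
    (z : Fin n → ℝ) :
    let a := riccatiInput A P B r z
    (A *ᵥ z + a • B) ⬝ᵥ P *ᵥ (A *ᵥ z + a • B) + stageCost Q μ z a
      ≤ z ⬝ᵥ P *ᵥ z + μ ^ 2 / (4 * r) := by
  have := riccatiInput_step_eq hPsymm hs hric z
  have := mul_abs_sub_mul_sq_le (μ := μ) hr (riccatiInput A P B r z)
  simp only [stageCost] at *
  linarith

end Riccati

theorem open_loop_bound_general {n N : ℕ}
    (A : Matrix (Fin n) (Fin n) ℝ) (B : Fin n → ℝ)
    (Q : Matrix (Fin n) (Fin n) ℝ) (hQ : Q.PosDef)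
    (μ ε : ℝ) (hμ : 0 < μ) (hε : 0 < ε)
    (P : Matrix (Fin n) (Fin n) ℝ) (hP : P.PosDef)
    (hric : P = Aᵀ * P * A
      - (B ⬝ᵥ P.mulVec B + N * μ ^ 2 / (4 * ε))⁻¹ •
          vecMulVec ((Aᵀ * P).mulVec B) (B ᵥ* (P * A)) + Q)
    (Ustar : (Fin n → ℝ) → Fin N → ℝ)
    (hUstar : ∀ (x : Fin n → ℝ) (U : Fin N → ℝ),
      costJ A B P Q μ (Ustar x) x ≤ costJ A B P Q μ U x) :
    ∀ (x : Fin n → ℝ) (i : ℕ), 1 ≤ i → i ≤ N →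
      (⨅ U : Fin N → ℝ, costJ A B P Q μ U (fIter A B Ustar i x))
          - (⨅ U : Fin N → ℝ, costJ A B P Q μ U x)
        ≤ -(⨅ j, hQ.1.eigenvalues j) * (x ⬝ᵥ x) + ε := by
  intro x i hi hiN
  set r : ℝ := N * μ ^ 2 / (4 * ε)
  have hN : (0 : ℝ) < N := by exact_mod_cast (by omega : 0 < N)
  have hr : 0 < r := by positivity
  have hPsymm : Pᵀ = P := by rw [← conjTranspose_eq_transpose_of_trivial]; exact hP.1
  have hs : B ⬝ᵥ P *ᵥ B + r ≠ 0 := by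
    have := hP.posSemidef.dotProduct_mulVec_nonneg B
    simp only [star_trivial] at this
    positivity
  have hδ : μ ^ 2 / (4 * r) = ε / N := by simp only [r]; field_simp
  have hdecrease := iInf_costJ_fIter_le A B P hQ.posSemidef hμ.le _ (ε / N)
    (fun z => (riccatiInput_step_le μ hPsymm hr hs hric z).trans_eq (by rw [hδ]))
    Ustar hUstar x hi hiN
  have hiε : i * (ε / N) ≤ ε := by
    rw [mul_div_assoc', div_le_iff₀ hN]
    exact mul_le_mul_of_nonneg_right (by exact_mod_cast hiN) hε.le |>.trans_eq (mul_comm _ _)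
  linarith [hQ.1.iInf_eigenvalues_mul_dotProduct_le x]

/-- **Open-loop bound.** If `P` solves the Riccati equation with `r = Nμ²/(4ε)`, then
for every `x` and every `i ∈ {1,…,N}`,
`V(f^i(x)) − V(x) ≤ −λ_min(Q)‖x‖₂² + ε`. -/
theorem open_loop_bound {n N : ℕ} (hN : 1 ≤ N)
    (A : Matrix (Fin n) (Fin n) ℝ) (B : Fin n → ℝ)
    (Q : Matrix (Fin n) (Fin n) ℝ) (hQ : Q.PosDef)
    (μ ε : ℝ) (hμ : 0 < μ) (hε : 0 < ε)
    (P : Matrix (Fin n) (Fin n) ℝ) (hP : P.PosDef)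
    (hric : P = Aᵀ * P * A
      - (B ⬝ᵥ P.mulVec B + N * μ ^ 2 / (4 * ε))⁻¹ •
          vecMulVec ((Aᵀ * P).mulVec B) (B ᵥ* (P * A)) + Q)
    (Ustar : (Fin n → ℝ) → Fin N → ℝ)
    (hUstar : ∀ (x : Fin n → ℝ) (U : Fin N → ℝ),
      costJ A B P Q μ (Ustar x) x ≤ costJ A B P Q μ U x) :
    ∀ (x : Fin n → ℝ) (i : ℕ), 1 ≤ i → i ≤ N →
      (⨅ U : Fin N → ℝ, costJ A B P Q μ U (fIter A B Ustar i x))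
          - (⨅ U : Fin N → ℝ, costJ A B P Q μ U x)
        ≤ -(⨅ j, hQ.1.eigenvalues j) * (x ⬝ᵥ x) + ε :=
  open_loop_bound_general A B Q hQ μ ε hμ hε P hP hric Ustar hUstar
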